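/- Let q ∈ ℂ[x,y] be a polynomial whose leading quasi-homogeneous part with respect to the weights (k,l) equals x^k + y^l for some coprime integers k, l ≥ 2. Then the quotient ℂ-algebra ℂ[x,y]/(q) is NOT isomorphic as a ℂ-algebra to ℂ[t]. -/

import Mathlib

open MvPolynomial

/-- The weighted degree of `r ∈ ℂ[x,y]` with respect to the weights `deg x = l`,
`deg y = k`: the maximum of `l·i + k·j` over monomials `x^i y^j` of `r`. -/
noncomputable def wdeg (k l : ℕ) (r : MvPolynomial (Fin 2) ℂ) : ℕ :=
  r.weightedTotalDegree ![l, k]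

/-- The leading quasi-homogeneous part of `r ∈ ℂ[x,y]` with respect to the weights
`(k, l)`: the sum of the monomials `a_{ij} x^i y^j` of `r` with `l·i + k·j` maximal. -/
noncomputable def leadingPart (k l : ℕ) (r : MvPolynomial (Fin 2) ℂ) :
    MvPolynomial (Fin 2) ℂ :=
  ∑ s ∈ r.support.filter (fun s => l * s 0 + k * s 1 = wdeg k l r),
    monomial s (coeff s r)

/-!
Let `ψ : ℂ[x,y] → ℂ[t]` be the surjection with kernel `(q)`, and `f = ψ x`, `g = ψ y` of degrees
`a`, `b`. Since `q = x^k + y^l + r` with `r` of weighted degree `< lk`, the top degrees in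
`f^k + g^l + r(f,g) = 0` must cancel, so `ka = lb`. Differentiating `q(f,g) = 0` gives
`q_x(f,g) f' + q_y(f,g) g' = 0`, where `q_x(f,g)` has degree exactly `(k-1)a ≥ b`. A common root
`c` of `q_x(f,g)` and `q_y(f,g)` would make `(f(c), g(c))` a singular point of `q = 0`, which is
impossible because `ψ` identifies the curve with a line; so the two are coprime, and then
`q_x(f,g)` divides `g' ≠ 0`, of degree `< b`: a contradiction.
-/

open Polynomial (derivative)

theorem Finsupp.weight_fin_two (w : Fin 2 → ℕ) (s : Fin 2 →₀ ℕ) :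
    Finsupp.weight w s = w 0 * s 0 + w 1 * s 1 := by
  simp [Finsupp.weight_apply, Finsupp.sum_fintype, Fin.sum_univ_two, mul_comm]

section LeadingPart

variable {k l : ℕ} {q : MvPolynomial (Fin 2) ℂ}

theorem coeff_leadingPart (t : Fin 2 →₀ ℕ) :
    coeff t (leadingPart k l q) =
      if l * t 0 + k * t 1 = wdeg k l q then coeff t q else 0 := by
  classical
  simp only [leadingPart, coeff_sum, coeff_monomial, Finset.sum_ite_eq', Finset.mem_filter,
    mem_support_iff]
  split_ifs <;> simp_all

theorem weight_le_wdeg {s : Fin 2 →₀ ℕ} (hs : s ∈ q.support) :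
    l * s 0 + k * s 1 ≤ wdeg k l q := by
  simpa [wdeg, Finsupp.weight_fin_two] using le_weightedTotalDegree ![l, k] hs

theorem weight_eq_wdeg_of_mem_support_leadingPart {s : Fin 2 →₀ ℕ}
    (hs : s ∈ (leadingPart k l q).support) : l * s 0 + k * s 1 = wdeg k l q := by
  by_contra h
  simp [coeff_leadingPart, h] at hs

theorem weight_lt_wdeg_of_mem_support_sub_leadingPart {s : Fin 2 →₀ ℕ}
    (hs : s ∈ (q - leadingPart k l q).support) : l * s 0 + k * s 1 < wdeg k l q := by
  rw [mem_support_iff, coeff_sub, coeff_leadingPart] at hs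
  split_ifs at hs with h
  · simp at hs
  · exact lt_of_le_of_ne (weight_le_wdeg (by simpa using hs)) h

theorem weight_lt_of_leadingPart_eq (hk : k ≠ 0)
    (hlead : leadingPart k l q = X 0 ^ k + X 1 ^ l) {s : Fin 2 →₀ ℕ}
    (hs : s ∈ (q - (X 0 ^ k + X 1 ^ l)).support) : l * s 0 + k * s 1 < l * k := by
  have hmem : Finsupp.single 0 k ∈ (leadingPart k l q).support := by
    rw [hlead, mem_support_iff, coeff_add, X_pow_eq_monomial, X_pow_eq_monomial, coeff_monomial,
      coeff_monomial, if_pos rfl, if_neg]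
    · simp
    · intro h
      exact hk (by simpa using DFunLike.congr_fun h 0 : 0 = k).symm
  have hwdeg := weight_eq_wdeg_of_mem_support_leadingPart hmem
  simp only [Finsupp.single_eq_same, Finsupp.single_eq_of_ne (by decide : (1 : Fin 2) ≠ 0)] at hwdeg
  rw [← hlead] at hs
  have := weight_lt_wdeg_of_mem_support_sub_leadingPart hs
  omega

end LeadingPart

section Degree

variable {R σ : Type*} [CommSemiring R] (ψ : MvPolynomial σ R →ₐ[R] Polynomial R)

theorem natDegree_map_monomial_le (s : σ →₀ ℕ) (c : R) :
    (ψ (monomial s c)).natDegree ≤ Finsupp.weight (fun i => (ψ (X i)).natDegree) s := by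
  rw [monomial_eq, map_mul, algHom_C, map_finsuppProd, Finsupp.weight_apply,
    Algebra.algebraMap_eq_smul_one, smul_one_mul]
  refine (Polynomial.natDegree_smul_le _ _).trans ((Polynomial.natDegree_prod_le _ _).trans ?_)
  exact Finset.sum_le_sum fun i _ => by simpa using Polynomial.natDegree_pow_le

theorem degree_map_lt {r : MvPolynomial σ R} {N : ℕ}
    (h : ∀ s ∈ r.support, Finsupp.weight (fun i => (ψ (X i)).natDegree) s < N) :
    (ψ r).degree < N := by
  rw [r.as_sum, map_sum]
  refine (Polynomial.degree_sum_le _ _).trans_lt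
    ((Finset.sup_lt_iff (WithBot.bot_lt_coe N)).2 fun s hs => ?_)
  exact Polynomial.degree_le_natDegree.trans_lt
    (WithBot.coe_lt_coe.2 ((natDegree_map_monomial_le ψ s _).trans_lt (h s hs)))

theorem degree_map_pderiv_lt {r : MvPolynomial σ R} {N : ℕ} (i : σ)
    (h : ∀ s ∈ r.support,
      Finsupp.weight (fun i => (ψ (X i)).natDegree) s < N + (ψ (X i)).natDegree) :
    (ψ (pderiv i r)).degree < N := by
  refine degree_map_lt ψ fun t ht => ?_
  rw [mem_support_iff, coeff_pderiv] at ht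
  have := h _ (mem_support_iff.2 (left_ne_zero_of_mul ht))
  rw [map_add, Finsupp.weight_single, one_smul] at this
  omega

end Degree

theorem Polynomial.natDegree_eq_of_add_add_eq_zero {R : Type*} [Semiring R]
    {u w z : Polynomial R} (h : u + w + z = 0) (hz : z.degree < max u.natDegree w.natDegree) :
    u.natDegree = w.natDegree := by
  wlog huw : u.natDegree ≤ w.natDegree generalizing u w
  · exact (this (by rwa [add_comm w u]) (by rwa [max_comm]) (le_of_not_ge huw)).symm
  by_contra hne
  have hlt : u.natDegree < w.natDegree := lt_of_le_of_ne huw hne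
  have hw : w ≠ 0 := by rintro rfl; simp at hlt
  rw [max_eq_right huw] at hz
  have := congrArg (Polynomial.coeff · w.natDegree) h
  simp [Polynomial.coeff_eq_zero_of_natDegree_lt hlt, Polynomial.coeff_eq_zero_of_degree_lt hz,
    hw] at this

theorem add_mul_lt_of_weight_lt {k l a b M i j : ℕ} (hka : k * a ≤ M) (hlb : l * b ≤ M)
    (hM : 0 < M) (h : l * i + k * j < l * k) : a * i + b * j < M := by
  have : k * l * (a * i + b * j) < k * l * M := by
    calc k * l * (a * i + b * j) = k * a * (l * i) + l * b * (k * j) := by ring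
      _ ≤ M * (l * i) + M * (k * j) :=
          add_le_add (Nat.mul_le_mul_right _ hka) (Nat.mul_le_mul_right _ hlb)
      _ = M * (l * i + k * j) := by ring
      _ < M * (l * k) := Nat.mul_lt_mul_of_pos_left h hM
      _ = k * l * M := by ring
  exact Nat.lt_of_mul_lt_mul_left this

theorem le_pred_mul_of_mul_eq_mul {k l a b : ℕ} (hk : 2 ≤ k) (hl : 2 ≤ l) (h : k * a = l * b) :
    b ≤ (k - 1) * a := by
  obtain ⟨k, rfl⟩ : ∃ k', k = k' + 1 := ⟨k - 1, by omega⟩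
  rw [Nat.add_sub_cancel]
  nlinarith

section Parametrization

variable {R σ : Type*} [CommRing R] (ψ : MvPolynomial σ R →ₐ[R] Polynomial R)

theorem derivative_map_eq_sum_pderiv [Fintype σ] (r : MvPolynomial σ R) :
    derivative (ψ r) = ∑ i, ψ (pderiv i r) * derivative (ψ (X i)) := by
  classical
  induction r using MvPolynomial.induction_on with
  | C a => simp
  | add p q hp hq => simp [hp, hq, Finset.sum_add_distrib, add_mul]
  | mul_X p i hp =>
    simp only [map_mul, Polynomial.derivative_mul, hp, Finset.sum_mul, add_comm,
      Derivation.leibniz, pderiv_X, Pi.single_apply, smul_eq_mul, mul_ite, mul_one, mul_zero,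
      map_add, apply_ite ψ, map_zero, add_mul, ite_mul, zero_mul, Finset.sum_add_distrib,
      Finset.sum_ite_eq, Finset.mem_univ, ↓reduceIte, add_right_inj]
    exact congrArg _ (funext fun _ => by ring)

theorem Polynomial.X_sub_C_sq_dvd_of_eval_eq_zero {p : Polynomial R} {c : R}
    (h : p.eval c = 0) (h' : (derivative p).eval c = 0) :
    (Polynomial.X - Polynomial.C c) ^ 2 ∣ p := by
  obtain ⟨p₁, rfl⟩ := Polynomial.dvd_iff_isRoot.2 h
  obtain ⟨p₂, rfl⟩ : Polynomial.X - Polynomial.C c ∣ p₁ :=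
    Polynomial.dvd_iff_isRoot.2 (by simpa using h')
  exact ⟨p₂, by ring⟩

theorem exists_algHom_surjective_ker_eq_of_quotient_algEquiv (q : MvPolynomial σ R)
    (e : (MvPolynomial σ R ⧸ Ideal.span {q}) ≃ₐ[R] Polynomial R) :
    ∃ ψ : MvPolynomial σ R →ₐ[R] Polynomial R,
      Function.Surjective ψ ∧ RingHom.ker ψ = Ideal.span {q} := by
  refine ⟨e.toAlgHom.comp (Ideal.Quotient.mkₐ R _),
    e.surjective.comp (Ideal.Quotient.mkₐ_surjective R _), ?_⟩
  ext h
  simp [RingHom.mem_ker, Ideal.Quotient.eq_zero_iff_mem]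

variable {ψ} {q : MvPolynomial σ R}

theorem exists_eval_derivative_ne_zero [Nontrivial R] [Fintype σ]
    (hsurj : Function.Surjective ψ) (c : R) : ∃ i, (derivative (ψ (X i))).eval c ≠ 0 := by
  obtain ⟨P, hP⟩ := hsurj Polynomial.X
  by_contra! h
  simpa [hP, Polynomial.eval_finsetSum, h] using
    congrArg (Polynomial.eval c) (derivative_map_eq_sum_pderiv ψ P)

theorem exists_natDegree_pos_of_surjective [Nontrivial R] [Fintype σ]
    (hsurj : Function.Surjective ψ) : ∃ i, 0 < (ψ (X i)).natDegree := by
  obtain ⟨i, hi⟩ := exists_eval_derivative_ne_zero hsurj 0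
  exact ⟨i, Nat.pos_of_ne_zero fun h => hi (by simp [Polynomial.derivative_of_natDegree_zero h])⟩

/-- Modulo `q`, `h` is `(P - c)² h₁` with `ψ P = t`; both `(P - c)²` and a `q` singular at the
point over `c` have vanishing gradient there. -/
theorem eval_pderiv_eq_zero_of_sq_dvd (hsurj : Function.Surjective ψ)
    (hker : RingHom.ker ψ = Ideal.span {q}) {c : R} (hsing : ∀ i, (ψ (pderiv i q)).eval c = 0)
    {h : MvPolynomial σ R} (hdvd : (Polynomial.X - Polynomial.C c) ^ 2 ∣ ψ h) (i : σ) :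
    (ψ (pderiv i h)).eval c = 0 := by
  obtain ⟨u, hu⟩ := hdvd
  obtain ⟨P, hP⟩ := hsurj Polynomial.X
  obtain ⟨h₁, hh₁⟩ := hsurj u
  have hmem : h - (P - C c) ^ 2 * h₁ ∈ RingHom.ker ψ := by simp [hu, hP, hh₁]
  obtain ⟨h₂, hh₂⟩ := Ideal.mem_span_singleton.1 (hker ▸ hmem)
  have hq : ψ q = 0 := RingHom.mem_ker.1 (hker ▸ Ideal.mem_span_singleton_self q)
  rw [show h = (P - C c) ^ 2 * h₁ + q * h₂ by linear_combination hh₂]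
  simp [hP, hq, hsing i]

theorem exists_eval_map_pderiv_ne_zero [Nontrivial R]
    {ψ : MvPolynomial (Fin 2) R →ₐ[R] Polynomial R} {q : MvPolynomial (Fin 2) R}
    (hsurj : Function.Surjective ψ)
    (hker : RingHom.ker ψ = Ideal.span {q}) (c : R) : ∃ i, (ψ (pderiv i q)).eval c ≠ 0 := by
  by_contra! hsing
  obtain ⟨i, hi⟩ := exists_eval_derivative_ne_zero hsurj c
  set α := (derivative (ψ (X 0))).eval c
  set β := (derivative (ψ (X 1))).eval c
  -- `w` vanishes on the tangent line of the curve at `c`, so `ψ w` has a double root there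
  set w : MvPolynomial (Fin 2) R :=
    C β * (X 0 - C ((ψ (X 0)).eval c)) - C α * (X 1 - C ((ψ (X 1)).eval c))
  have hw : (Polynomial.X - Polynomial.C c) ^ 2 ∣ ψ w :=
    Polynomial.X_sub_C_sq_dvd_of_eval_eq_zero (by simp [w]) (by simp [w, α, β]; ring)
  have hβ : β = 0 := by
    simpa [w, pderiv_X] using eval_pderiv_eq_zero_of_sq_dvd hsurj hker hsing hw 0
  have hα : α = 0 := by
    simpa [w, pderiv_X] using eval_pderiv_eq_zero_of_sq_dvd hsurj hker hsing hw 1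
  fin_cases i
  exacts [hi hα, hi hβ]

end Parametrization

theorem Polynomial.natDegree_lt_of_isCoprime_of_add_eq_zero {K : Type*} [Field K] [CharZero K]
    {A B f g : Polynomial K} (hAB : IsCoprime A B)
    (h : A * derivative f + B * derivative g = 0) (hg : 0 < g.natDegree) :
    A.natDegree < g.natDegree := by
  have hdvd : A ∣ derivative g := hAB.dvd_of_dvd_mul_left ⟨-derivative f, by linear_combination h⟩
  exact (Polynomial.natDegree_le_of_dvd hdvd (Polynomial.derivative_eq_zero.not.2 hg.ne')).trans_lt
    (Polynomial.natDegree_derivative_lt hg.ne')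

section WeightedCurve

variable {K : Type*} [Field K] (ψ : MvPolynomial (Fin 2) K →ₐ[K] Polynomial K) {k l : ℕ}
  {r : MvPolynomial (Fin 2) K}

theorem degree_map_lt_of_weight_lt (hr : ∀ s ∈ r.support, l * s 0 + k * s 1 < l * k) {M : ℕ}
    (hka : k * (ψ (X 0)).natDegree ≤ M) (hlb : l * (ψ (X 1)).natDegree ≤ M) (hM : 0 < M) :
    (ψ r).degree < M :=
  degree_map_lt ψ fun s hs => by
    simpa [Finsupp.weight_fin_two] using add_mul_lt_of_weight_lt hka hlb hM (hr s hs)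

theorem mul_natDegree_eq_of_map_eq_zero (hr : ∀ s ∈ r.support, l * s 0 + k * s 1 < l * k)
    (hψ : ψ (X 0 ^ k + X 1 ^ l + r) = 0)
    (hpos : 0 < max (k * (ψ (X 0)).natDegree) (l * (ψ (X 1)).natDegree)) :
    k * (ψ (X 0)).natDegree = l * (ψ (X 1)).natDegree := by
  rw [← Polynomial.natDegree_pow, ← Polynomial.natDegree_pow]
  refine Polynomial.natDegree_eq_of_add_add_eq_zero (by simpa using hψ) ?_
  rw [Polynomial.natDegree_pow, Polynomial.natDegree_pow]
  exact_mod_cast degree_map_lt_of_weight_lt ψ hr (le_max_left _ _) (le_max_right _ _) hpos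

theorem natDegree_map_pderiv_zero_eq [CharZero K]
    (hr : ∀ s ∈ r.support, l * s 0 + k * s 1 < l * k) (hk : k ≠ 0)
    (hab : k * (ψ (X 0)).natDegree = l * (ψ (X 1)).natDegree) (ha : 0 < (ψ (X 0)).natDegree) :
    (ψ (pderiv 0 (X 0 ^ k + X 1 ^ l + r))).natDegree = (k - 1) * (ψ (X 0)).natDegree := by
  set a := (ψ (X 0)).natDegree
  have hlead : (Polynomial.C (k : K) * ψ (X 0) ^ (k - 1)).degree = ((k - 1) * a : ℕ) := by
    rw [Polynomial.degree_C_mul (by exact_mod_cast hk), Polynomial.degree_pow,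
      Polynomial.degree_eq_natDegree (fun h => by simp [a, h] at ha)]
    push_cast; ring
  have hrest : (ψ (pderiv 0 r)).degree < ((k - 1) * a : ℕ) :=
    degree_map_pderiv_lt ψ 0 fun s hs => by
      have := add_mul_lt_of_weight_lt le_rfl hab.ge (by positivity) (hr s hs)
      rwa [Finsupp.weight_fin_two, ← Nat.succ_mul, Nat.sub_one, Nat.succ_pred_eq_of_ne_zero hk]
  have : ψ (pderiv 0 (X 0 ^ k + X 1 ^ l + r)) =
      Polynomial.C (k : K) * ψ (X 0) ^ (k - 1) + ψ (pderiv 0 r) := by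
    simp [pderiv_X]
  rw [this, Polynomial.natDegree_add_eq_left_of_degree_lt (hlead ▸ hrest),
    Polynomial.natDegree_eq_of_degree_eq_some hlead]

end WeightedCurve

theorem zero_fiber_not_a_line_general
    (q : MvPolynomial (Fin 2) ℂ)
    (k l : ℕ) (hk : 2 ≤ k) (hl : 2 ≤ l)
    (hlead : leadingPart k l q = X 0 ^ k + X 1 ^ l) :
    ¬ Nonempty ((MvPolynomial (Fin 2) ℂ ⧸ Ideal.span {q}) ≃ₐ[ℂ] Polynomial ℂ) := by
  rintro ⟨e⟩
  obtain ⟨ψ, hsurj, hker⟩ := exists_algHom_surjective_ker_eq_of_quotient_algEquiv q e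
  set r := q - (X 0 ^ k + X 1 ^ l)
  have hr : ∀ s ∈ r.support, l * s 0 + k * s 1 < l * k :=
    fun s => weight_lt_of_leadingPart_eq (by omega) hlead
  have hq : q = X 0 ^ k + X 1 ^ l + r := (add_sub_cancel _ _).symm
  have hψq : ψ q = 0 := RingHom.mem_ker.1 (hker ▸ Ideal.mem_span_singleton_self q)
  have hpos : 0 < max (k * (ψ (X 0)).natDegree) (l * (ψ (X 1)).natDegree) := by
    obtain ⟨i, hi⟩ := exists_natDegree_pos_of_surjective hsurj
    fin_cases i
    exacts [lt_max_of_lt_left (by positivity), lt_max_of_lt_right (by positivity)]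
  have hab := mul_natDegree_eq_of_map_eq_zero ψ hr (hq ▸ hψq) hpos
  rw [← hab, max_self] at hpos
  have hA := natDegree_map_pderiv_zero_eq ψ hr (by omega) hab (Nat.pos_of_mul_pos_left hpos)
  rw [← hq] at hA
  have hcop : IsCoprime (ψ (pderiv 0 q)) (ψ (pderiv 1 q)) :=
    (Polynomial.isCoprime_iff_aeval_ne_zero_of_isAlgClosed ℂ ℂ _ _).2 fun c => by
      simpa [Fin.exists_fin_two, or_iff_not_imp_left] using
        exists_eval_map_pderiv_ne_zero hsurj hker c
  have hchain :
      ψ (pderiv 0 q) * derivative (ψ (X 0)) + ψ (pderiv 1 q) * derivative (ψ (X 1)) = 0 := by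
    simpa [hψq, Fin.sum_univ_two] using (derivative_map_eq_sum_pderiv ψ q).symm
  have hlt := Polynomial.natDegree_lt_of_isCoprime_of_add_eq_zero hcop hchain
    (Nat.pos_of_mul_pos_left (hab ▸ hpos))
  have := le_pred_mul_of_mul_eq_mul hk hl hab
  omega

/-- Core contradiction in the paper's proof of the Abhyankar–Moh–Suzuki theorem:
a polynomial `q ∈ ℂ[x,y]` whose leading quasi-homogeneous part with respect to coprime
weights `(k, l)`, `k, l ≥ 2`, equals `x^k + y^l` cannot have its zero fiber isomorphic
to `ℂ`, i.e. `ℂ[x,y]/(q)` is not isomorphic to `ℂ[t]` as a ℂ-algebra. -/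
theorem zero_fiber_not_a_line
    (q : MvPolynomial (Fin 2) ℂ)
    (k l : ℕ) (hk : 2 ≤ k) (hl : 2 ≤ l) (hkl : Nat.Coprime k l)
    (hlead : leadingPart k l q = X 0 ^ k + X 1 ^ l) :
    ¬ Nonempty ((MvPolynomial (Fin 2) ℂ ⧸ Ideal.span {q}) ≃ₐ[ℂ] Polynomial ℂ) :=
  zero_fiber_not_a_line_general q k l hk hl hlead
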